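/- arXiv:2304.08596 — 6 statements merged into one kernel-verified Lean document; each statement's English description precedes it below -/
import Mathlib

section
/- The projection of SO(n) onto its strictly upper triangular entries equals the projection of O(n) onto its strictly upper triangular entries, which equals the projection of the operator norm unit ball onto its strictly upper triangular entries; in particular, all three images are convex. -/
open Matrix

/-- The special orthogonal group `SO(n)`. -/
def SpecialOrthogonal (n : ℕ) : Set (Matrix (Fin n) (Fin n) ℝ) :=
  {X | Xᵀ * X = 1 ∧ X.det = 1}

/-- The orthogonal group `O(n)`. -/
def OrthogonalGroup (n : ℕ) : Set (Matrix (Fin n) (Fin n) ℝ) :=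
  {X | Xᵀ * X = 1}

/-- The ℓ²→ℓ² operator norm of a real matrix. -/
noncomputable def opNorm {m p : ℕ} (M : Matrix (Fin m) (Fin p) ℝ) : ℝ :=
  ‖LinearMap.toContinuousLinearMap (Matrix.toEuclideanLin (𝕜 := ℝ) M)‖

/-- The operator norm unit ball in `ℝ^{n×n}`. -/
noncomputable def opNormBall (n : ℕ) : Set (Matrix (Fin n) (Fin n) ℝ) :=
  {X | opNorm X ≤ 1}

/-- The projection of a matrix onto its strictly upper triangular entries. -/
def sutProj {n : ℕ} (X : Matrix (Fin n) (Fin n) ℝ) :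
    {q : Fin n × Fin n // q.1 < q.2} → ℝ :=
  fun q => X q.1.1 q.1.2

/-!
If `opNorm X ≤ 1`, the rows `xᵢ` of `X` satisfy the Bessel inequality `∑ᵢ ⟪xᵢ, v⟫² ≤ ‖v‖²`.
An orthogonal `Y` with the same strictly upper triangular part is built row by row, row `i`
being free only in its first `i + 1` coordinates. The first row is moved along one of these
coordinate directions onto the unit sphere; the other rows are corrected along the same direction
to become orthogonal to it, and the Bessel inequality survives on its orthogonal complement, where
one recurses. Conversely orthogonal matrices are contractions, and reflecting the last row, which
has no strictly upper triangular entry, turns `O(n)` into `SO(n)`. Convexity is inherited from the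
operator norm ball through the linear projection.
-/

open Module
open scoped RealInnerProductSpace

section BesselFamily

variable {H : Type*} [NormedAddCommGroup H] [InnerProductSpace ℝ H]

lemma norm_le_one_of_sum_inner_sq_le {ι : Type*} [Fintype ι] {x : ι → H}
    (hx : ∀ v, ∑ i, ⟪x i, v⟫ ^ 2 ≤ ‖v‖ ^ 2) (i : ι) : ‖x i‖ ≤ 1 := by
  have h : ⟪x i, x i⟫ ^ 2 ≤ ‖x i‖ ^ 2 :=
    (Finset.single_le_sum (f := fun j => ⟪x j, x i⟫ ^ 2) (fun j _ => sq_nonneg _)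
      (Finset.mem_univ i)).trans (hx (x i))
  rw [real_inner_self_eq_norm_sq] at h
  rw [← sq_le_one_iff₀ (norm_nonneg _)]
  nlinarith [norm_nonneg (x i)]

lemma inner_succ_eq_zero_of_sum_inner_sq_le {m : ℕ} {x : Fin (m + 1) → H}
    (hx : ∀ v, ∑ i, ⟪x i, v⟫ ^ 2 ≤ ‖v‖ ^ 2) (h₀ : ‖x 0‖ = 1) (i : Fin m) :
    ⟪x 0, x i.succ⟫ = 0 := by
  have h := hx (x 0)
  rw [Fin.sum_univ_succ, real_inner_self_eq_norm_sq, h₀] at h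
  have hsum : ∑ j : Fin m, ⟪x j.succ, x 0⟫ ^ 2 = 0 :=
    le_antisymm (by linarith) (Finset.sum_nonneg fun j _ => sq_nonneg _)
  rw [Finset.sum_eq_zero_iff_of_nonneg fun j _ => sq_nonneg _] at hsum
  rw [real_inner_comm]
  exact pow_eq_zero_iff two_ne_zero |>.mp (hsum i (Finset.mem_univ i))

/-- The second clause says that a tangency `⟪x + τ • w, w⟫ = 0` only happens when `x` itself is
already a unit vector. -/
lemma exists_norm_add_smul_eq_one {x w : H} (hx : ‖x‖ ≤ 1) (hw : ‖w‖ = 1) :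
    ∃ τ : ℝ, ‖x + τ • w‖ = 1 ∧ (⟪x + τ • w, w⟫ = 0 → τ = 0) := by
  set c := ⟪x, w⟫
  have hc : c ^ 2 ≤ ‖x‖ ^ 2 := by
    have := abs_real_inner_le_norm x w
    rw [hw, mul_one] at this
    exact sq_le_sq' (abs_le.mp this).1 (abs_le.mp this).2
  set g := √(c ^ 2 + 1 - ‖x‖ ^ 2)
  have hg : g ^ 2 = c ^ 2 + 1 - ‖x‖ ^ 2 := Real.sq_sqrt (by nlinarith [norm_nonneg x])
  have hinner : ⟪x + (g - c) • w, w⟫ = g := by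
    rw [inner_add_left, real_inner_smul_left, real_inner_self_eq_norm_sq, hw]; ring
  refine ⟨g - c, ?_, fun h => ?_⟩
  · rw [← pow_eq_one_iff_of_nonneg (norm_nonneg _) two_ne_zero, norm_add_sq_real,
      real_inner_smul_right, norm_smul, Real.norm_eq_abs, hw, mul_one, sq_abs]
    nlinarith
  · rw [hinner] at h
    rw [h] at hg ⊢
    nlinarith [sq_nonneg c, norm_nonneg x]

lemma sum_inner_sq_le_of_orthogonal {m : ℕ} {x : Fin (m + 1) → H}
    (hx : ∀ v, ∑ i, ⟪x i, v⟫ ^ 2 ≤ ‖v‖ ^ 2) {y₀ w : H} {τ : ℝ} (hy₀ : ‖y₀‖ = 1)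
    (hx₀ : x 0 = y₀ - τ • w) (hg : ⟪y₀, w⟫ ≠ 0) {v : H} (hv : ⟪y₀, v⟫ = 0) :
    ∑ i : Fin m, ⟪x i.succ - (⟪x i.succ, y₀⟫ / ⟪y₀, w⟫) • w, v⟫ ^ 2 ≤ ‖v‖ ^ 2 := by
  set g := ⟪y₀, w⟫
  set s := ⟪w, v⟫ / g
  -- Test the whole family against `v - s • y₀`: the first term contributes exactly `s ^ 2`,
  -- which is also what the norm gains.
  have h₀ : ⟪x 0, v - s • y₀⟫ = -s := by
    rw [hx₀, inner_sub_left, inner_sub_right, inner_sub_right, real_inner_smul_left,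
      real_inner_smul_left, real_inner_smul_right, real_inner_smul_right, hv,
      real_inner_self_eq_norm_sq, hy₀, real_inner_comm y₀ w, div_mul_cancel₀ _ hg]
    ring
  have hsucc : ∀ i : Fin m,
      ⟪x i.succ - (⟪x i.succ, y₀⟫ / g) • w, v⟫ = ⟪x i.succ, v - s • y₀⟫ := fun i => by
    rw [inner_sub_left, inner_sub_right, real_inner_smul_left, real_inner_smul_right]
    ring
  have hnorm : ‖v - s • y₀‖ ^ 2 = ‖v‖ ^ 2 + s ^ 2 := by
    rw [norm_sub_sq_real, real_inner_smul_right, real_inner_comm y₀ v, hv, norm_smul, hy₀,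
      Real.norm_eq_abs, mul_one, sq_abs]
    ring
  have h := hx (v - s • y₀)
  rw [Fin.sum_univ_succ, h₀, hnorm] at h
  simp_rw [hsucc]
  linarith

lemma exists_unit_sub_mem_orthogonal_tail {m : ℕ} {x : Fin (m + 1) → H}
    (hx : ∀ v, ∑ i, ⟪x i, v⟫ ^ 2 ≤ ‖v‖ ^ 2) {U : Submodule ℝ H} (hU : U ≠ ⊥) :
    ∃ (y₀ : H) (x' : Fin m → H), ‖y₀‖ = 1 ∧ y₀ - x 0 ∈ U ∧ (∀ i, x' i - x i.succ ∈ U) ∧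
      (∀ i, ⟪y₀, x' i⟫ = 0) ∧ ∀ v, ⟪y₀, v⟫ = 0 → ∑ i, ⟪x' i, v⟫ ^ 2 ≤ ‖v‖ ^ 2 := by
  obtain ⟨w₀, hw₀U, hw₀⟩ := Submodule.exists_mem_ne_zero_of_ne_bot hU
  set w := ‖w₀‖⁻¹ • w₀
  have hw : ‖w‖ = 1 := norm_smul_inv_norm hw₀
  have hwU : w ∈ U := U.smul_mem _ hw₀U
  obtain ⟨τ, hy₀, hdeg⟩ := exists_norm_add_smul_eq_one (norm_le_one_of_sum_inner_sq_le hx 0) hw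
  by_cases hg : ⟪x 0 + τ • w, w⟫ = 0
  · obtain rfl := hdeg hg
    rw [zero_smul, add_zero] at hy₀
    refine ⟨x 0, fun i => x i.succ, hy₀, by simp, by simp,
      inner_succ_eq_zero_of_sum_inner_sq_le hx hy₀, fun v _ => ?_⟩
    have := hx v
    rw [Fin.sum_univ_succ] at this
    linarith [sq_nonneg ⟪x 0, v⟫]
  · refine ⟨x 0 + τ • w, fun i => x i.succ - (⟪x i.succ, x 0 + τ • w⟫ / ⟪x 0 + τ • w, w⟫) • w,
      hy₀, ?_, fun i => ?_, fun i => ?_,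
      fun v hv => sum_inner_sq_le_of_orthogonal hx hy₀ (by abel) hg hv⟩
    · simpa using U.smul_mem τ hwU
    · simpa using U.smul_mem _ hwU
    · rw [inner_sub_right, real_inner_smul_right, real_inner_comm]
      field_simp
      ring

lemma finrank_le_finrank_comap_orthogonal_add_one [FiniteDimensional ℝ H]
    (W : Submodule ℝ H) (y : H) :
    finrank ℝ W ≤ finrank ℝ (W.comap (ℝ ∙ y)ᗮ.subtype) + 1 := by
  have h₀ : finrank ℝ (W.comap (ℝ ∙ y)ᗮ.subtype) = finrank ℝ ↥((ℝ ∙ y)ᗮ ⊓ W) := by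
    rw [← Submodule.map_comap_subtype]
    exact (Submodule.equivMapOfInjective _ (ℝ ∙ y)ᗮ.injective_subtype _).finrank_eq
  have h₁ := Submodule.finrank_sup_add_finrank_inf_eq (ℝ ∙ y)ᗮ W
  have h₂ := (ℝ ∙ y).finrank_add_finrank_orthogonal
  have h₃ : finrank ℝ (ℝ ∙ y) ≤ 1 := by simpa using finrank_span_le_card ({y} : Set H)
  have h₄ := Submodule.finrank_le ((ℝ ∙ y)ᗮ ⊔ W)
  omega

theorem exists_orthonormal_sub_mem [FiniteDimensional ℝ H] {m : ℕ} (x : Fin m → H)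
    (W : Fin m → Submodule ℝ H) (hW : Monotone W)
    (hdim : ∀ i : Fin m, (i : ℕ) + 1 ≤ finrank ℝ (W i))
    (hx : ∀ v, ∑ i, ⟪x i, v⟫ ^ 2 ≤ ‖v‖ ^ 2) :
    ∃ y : Fin m → H, Orthonormal ℝ y ∧ ∀ i, y i - x i ∈ W i := by
  induction m generalizing H with
  | zero => exact ⟨Fin.elim0, .of_isEmpty _, fun i => i.elim0⟩
  | succ m ih =>
    have hW₀ : W 0 ≠ ⊥ := fun h => by simpa [h] using hdim 0
    obtain ⟨y₀, x', hy₀, hy₀x, hx'x, hy₀x', hx'⟩ := exists_unit_sub_mem_orthogonal_tail hx hW₀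
    have hK : ∀ {v}, v ∈ (ℝ ∙ y₀)ᗮ ↔ ⟪y₀, v⟫ = 0 :=
      Submodule.mem_orthogonal_singleton_iff_inner_right
    obtain ⟨y', hy', hy'x⟩ := ih (fun i => (⟨x' i, hK.mpr (hy₀x' i)⟩ : (ℝ ∙ y₀)ᗮ))
      (fun i => (W i.succ).comap (ℝ ∙ y₀)ᗮ.subtype)
      (fun i j hij => Submodule.comap_mono (hW (Fin.succ_le_succ_iff.mpr hij)))
      (fun i => by
        have := hdim i.succ
        have := finrank_le_finrank_comap_orthogonal_add_one (W i.succ) y₀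
        simp only [Fin.val_succ] at *
        omega)
      (fun v => by simpa using hx' v (hK.mp v.2))
    refine ⟨Matrix.vecCons y₀ fun i => y' i, ?_, Fin.cases hy₀x fun i => ?_⟩
    · exact orthonormal_vecCons_iff.mpr ⟨hy₀, fun i => hK.mp (y' i).2,
        hy'.comp_linearIsometry (ℝ ∙ y₀)ᗮ.subtypeₗᵢ⟩
    · have h₁ : (y' i : H) - x' i ∈ W i.succ := Submodule.mem_comap.mp (hy'x i)
      have h₂ : x' i - x i.succ ∈ W i.succ := hW (Fin.zero_le _) (hx'x i)
      simpa using add_mem h₁ h₂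

end BesselFamily

def stdFlag (n : ℕ) (i : Fin n) : Submodule ℝ (EuclideanSpace ℝ (Fin n)) :=
  LinearMap.ker (LinearMap.funLeft ℝ ℝ (Subtype.val : Set.Ioi i → Fin n) ∘ₗ
    (WithLp.linearEquiv 2 ℝ (Fin n → ℝ)).toLinearMap)

lemma mem_stdFlag {n : ℕ} {i : Fin n} {v : EuclideanSpace ℝ (Fin n)} :
    v ∈ stdFlag n i ↔ ∀ j, i < j → v j = 0 := by
  simp [stdFlag, funext_iff]

lemma monotone_stdFlag (n : ℕ) : Monotone (stdFlag n) := fun _ _ hii' _ hv =>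
  mem_stdFlag.mpr fun j hj => mem_stdFlag.mp hv j (hii'.trans_lt hj)

lemma le_finrank_stdFlag {n : ℕ} (i : Fin n) : (i : ℕ) + 1 ≤ finrank ℝ (stdFlag n i) := by
  set f := LinearMap.funLeft ℝ ℝ (Subtype.val : Set.Ioi i → Fin n) ∘ₗ
    (WithLp.linearEquiv 2 ℝ (Fin n → ℝ)).toLinearMap
  have h₁ := f.finrank_range_add_finrank_ker
  have h₂ := (LinearMap.range f).finrank_le
  rw [Module.finrank_fintype_fun_eq_card, Fintype.card_Ioi, Fin.card_Ioi] at h₂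
  rw [finrank_euclideanSpace_fin] at h₁
  change _ ≤ finrank ℝ (LinearMap.ker f)
  omega

lemma sum_inner_row_sq_le {m p : ℕ} (X : Matrix (Fin m) (Fin p) ℝ)
    (v : EuclideanSpace ℝ (Fin p)) :
    ∑ i, ⟪WithLp.toLp 2 (X i), v⟫ ^ 2 ≤ opNorm X ^ 2 * ‖v‖ ^ 2 := by
  set T := LinearMap.toContinuousLinearMap (Matrix.toEuclideanLin (𝕜 := ℝ) X)
  have hT : ∀ i, ⟪WithLp.toLp 2 (X i), v⟫ = T v i := fun i => by
    simp [T, EuclideanSpace.inner_eq_star_dotProduct, mulVec, dotProduct_comm]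
  calc ∑ i, ⟪WithLp.toLp 2 (X i), v⟫ ^ 2 = ‖T v‖ ^ 2 := by
        simp [hT, EuclideanSpace.norm_sq_eq]
    _ ≤ (opNorm X * ‖v‖) ^ 2 := by gcongr; exact T.le_opNorm v
    _ = opNorm X ^ 2 * ‖v‖ ^ 2 := by ring

lemma transpose_mul_self_of_orthonormal {ι : Type*} [Fintype ι] [DecidableEq ι]
    {y : ι → EuclideanSpace ℝ ι} (hy : Orthonormal ℝ y) :
    (Matrix.of fun i j => y i j)ᵀ * Matrix.of (fun i j => y i j) = 1 := by
  rw [mul_eq_one_comm, ← (gram_eq_one_iff_orthonormal (𝕜 := ℝ)).mpr hy]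
  ext i j
  simp [gram_apply, mul_apply, EuclideanSpace.inner_eq_star_dotProduct, dotProduct, mul_comm]

theorem exists_mem_orthogonalGroup_sutProj_eq {n : ℕ} {X : Matrix (Fin n) (Fin n) ℝ}
    (hX : opNorm X ≤ 1) : ∃ Y ∈ OrthogonalGroup n, sutProj Y = sutProj X := by
  have hrows (v : EuclideanSpace ℝ (Fin n)) : ∑ i, ⟪WithLp.toLp 2 (X i), v⟫ ^ 2 ≤ ‖v‖ ^ 2 :=
    (sum_inner_row_sq_le X v).trans <|
      mul_le_of_le_one_left (sq_nonneg _) (pow_le_one₀ (norm_nonneg _) hX)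
  obtain ⟨y, hy, hyX⟩ := exists_orthonormal_sub_mem _ (stdFlag n) (monotone_stdFlag n)
    le_finrank_stdFlag hrows
  refine ⟨Matrix.of fun i j => y i j, transpose_mul_self_of_orthonormal hy, ?_⟩
  funext ⟨⟨i, j⟩, hij⟩
  simpa [sutProj, sub_eq_zero] using mem_stdFlag.mp (hyX i) j hij

lemma opNorm_le_one_of_mem_orthogonalGroup {n : ℕ} {X : Matrix (Fin n) (Fin n) ℝ}
    (hX : X ∈ OrthogonalGroup n) : opNorm X ≤ 1 := by
  have hU : toEuclideanCLM (𝕜 := ℝ) X ∈ unitary _ := Unitary.map_mem _ <|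
    mem_unitaryGroup_iff'.mpr <| by
      rw [star_eq_conjTranspose, conjTranspose_eq_transpose_of_trivial]; exact hX
  exact (toEuclideanCLM (𝕜 := ℝ) X).opNorm_le_bound zero_le_one fun v => by
    rw [ContinuousLinearMap.norm_map_of_mem_unitary hU, one_mul]

theorem exists_mem_specialOrthogonal_sutProj_eq {n : ℕ} {X : Matrix (Fin n) (Fin n) ℝ}
    (hX : X ∈ OrthogonalGroup n) : ∃ Y ∈ SpecialOrthogonal n, sutProj Y = sutProj X := by
  have hdet : X.det = 1 ∨ X.det = -1 := by
    have := congrArg det hX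
    rw [det_mul, det_transpose, det_one] at this
    exact mul_self_eq_one_iff.mp this
  rcases hdet with h | h
  · exact ⟨X, ⟨hX, h⟩, rfl⟩
  cases n with
  | zero => norm_num at h
  | succ m =>
    let d : Fin (m + 1) → ℝ := Function.update 1 (Fin.last m) (-1)
    have hd : d * d = 1 := by
      funext i
      by_cases hi : i = Fin.last m <;> simp [d, hi]
    refine ⟨diagonal d * X, ⟨?_, ?_⟩, ?_⟩
    · rw [transpose_mul, diagonal_transpose, Matrix.mul_assoc, ← Matrix.mul_assoc (diagonal d),
        diagonal_mul_diagonal, ← Pi.mul_def, hd]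
      simpa using (show Xᵀ * X = 1 from hX)
    · simp [det_mul, h, d, Fin.prod_univ_castSucc]
    · funext ⟨⟨i, j⟩, hij⟩
      simp [sutProj, diagonal_mul, d, (hij.trans_le (Fin.le_last j)).ne]

lemma image_sutProj_orthogonalGroup (n : ℕ) :
    sutProj '' OrthogonalGroup n = sutProj '' opNormBall n :=
  (Set.image_mono fun _ => opNorm_le_one_of_mem_orthogonalGroup).antisymm <| by
    rintro _ ⟨X, hX, rfl⟩
    exact exists_mem_orthogonalGroup_sutProj_eq hX

lemma image_sutProj_specialOrthogonal (n : ℕ) :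
    sutProj '' SpecialOrthogonal n = sutProj '' OrthogonalGroup n :=
  (Set.image_mono fun _ => And.left).antisymm <| by
    rintro _ ⟨X, hX, rfl⟩
    exact exists_mem_specialOrthogonal_sutProj_eq hX

section
open scoped Matrix.Norms.L2Operator

lemma opNormBall_eq_closedBall (n : ℕ) : opNormBall n = Metric.closedBall 0 1 := by
  ext X
  simp [opNormBall, opNorm, l2_opNorm_def]

lemma convex_image_sutProj_opNormBall (n : ℕ) : Convex ℝ (sutProj '' opNormBall n) := by
  rw [opNormBall_eq_closedBall]
  exact (convex_closedBall 0 1).is_linear_image ⟨fun _ _ => rfl, fun _ _ => rfl⟩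

end

/-- The projections of `SO(n)`, `O(n)` and the operator norm ball onto the
strictly upper triangular entries coincide; in particular all three are convex. -/
theorem sut_projections_eq_and_convex (n : ℕ) :
    sutProj '' SpecialOrthogonal n = sutProj '' OrthogonalGroup n ∧
    sutProj '' OrthogonalGroup n = sutProj '' opNormBall n ∧
    Convex ℝ (sutProj '' SpecialOrthogonal n) ∧
    Convex ℝ (sutProj '' OrthogonalGroup n) ∧
    Convex ℝ (sutProj '' opNormBall n) := by
  have hSO := image_sutProj_specialOrthogonal n
  have hO := image_sutProj_orthogonalGroup n
  have hball := convex_image_sutProj_opNormBall n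
  exact ⟨hSO, hO, by rwa [hSO, hO], by rwa [hO], hball⟩
end

section
/- The parity polytope PP_n equals the set of x ∈ [−1,1]^n such that for every subset S ⊆ [n] of odd cardinality, ⟨x, 1_n − 2·1_S⟩ ≤ n − 2. -/
/-!
An even vertex `1 - 2·1_T` satisfies the inequalities: its inner product with `1 - 2·1_S`,
`|S|` odd, is `n - 2|S ∆ T|`, and `|S ∆ T|` is odd.

Conversely, by Hahn–Banach it suffices that for every linear functional `c` some even vertex
`v` has `⟨c, x⟩ ≤ ⟨c, v⟩`. Let `N = {i | c i < 0}`, so `1 - 2·1_N` is the sign pattern of `c`.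
If `|N|` is even this vertex gives `∑ |c i| ≥ ⟨c, x⟩`. If `|N|` is odd, split
`|c i| = (|c i| - m) + m` with `m = |c k|` minimal: the box bounds the first part and the
inequality for `N` the second, so `⟨c, x⟩ ≤ ∑ |c i| - 2m`, the value of `c` at the vertex
obtained by flipping the sign of coordinate `k`.
-/

def parityPolytope (n : ℕ) : Set (Fin n → ℝ) :=
  convexHull ℝ {x | (∀ i, x i = 1 ∨ x i = -1) ∧ ∏ i, x i = 1}

open Finset

lemma Finset.card_symmDiff_add_two_mul_card_inter {α : Type*} [DecidableEq α] (S T : Finset α) :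
    (symmDiff S T).card + 2 * (S ∩ T).card = S.card + T.card := by
  rw [symmDiff_eq_sup_sdiff_inf, sup_eq_union, inf_eq_inter,
    card_sdiff_of_subset inter_subset_union, ← card_union_add_card_inter]
  have := card_le_card (inter_subset_union (s := S) (t := T))
  omega

section

variable {ι : Type*} [DecidableEq ι]

def signVec (S : Finset ι) (i : ι) : ℝ := 1 - 2 * (if i ∈ S then 1 else 0)

lemma signVec_eq_ite (S : Finset ι) (i : ι) : signVec S i = if i ∈ S then -1 else 1 := by
  unfold signVec; split_ifs <;> norm_num

lemma signVec_symmDiff (S T : Finset ι) (i : ι) :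
    signVec (symmDiff S T) i = signVec S i * signVec T i := by
  by_cases hS : i ∈ S <;> by_cases hT : i ∈ T <;> simp [signVec_eq_ite, mem_symmDiff, hS, hT]

lemma signVec_mul_self (S : Finset ι) (i : ι) : signVec S i * signVec S i = 1 := by
  rw [signVec_eq_ite]; split_ifs <;> norm_num

lemma abs_signVec (S : Finset ι) (i : ι) : |signVec S i| = 1 := by
  rw [signVec_eq_ite]; split_ifs <;> simp

variable [Fintype ι]

lemma signVec_filter_neg_mul (c : ι → ℝ) (i : ι) :
    signVec {j | c j < 0} i * c i = |c i| := by
  by_cases h : c i < 0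
  · simp [signVec_eq_ite, h, abs_of_neg h]
  · simp [signVec_eq_ite, h, abs_of_nonneg (not_lt.1 h)]

lemma prod_signVec (S : Finset ι) : ∏ i, signVec S i = (-1) ^ S.card := by
  simp_rw [signVec_eq_ite, prod_ite_mem, univ_inter, prod_const]

lemma sum_signVec (S : Finset ι) : ∑ i, signVec S i = Fintype.card ι - 2 * S.card := by
  simp [signVec, sum_sub_distrib, mul_comm]

lemma sum_signVec_singleton_mul (c : ι → ℝ) (k : ι) :
    ∑ i, signVec {k} i * c i = ∑ i, c i - 2 * c k := by
  simp [signVec, sub_mul, sum_sub_distrib]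

lemma setOf_sign_prod_eq_one_eq_image_signVec :
    {x : ι → ℝ | (∀ i, x i = 1 ∨ x i = -1) ∧ ∏ i, x i = 1} =
      signVec '' {S : Finset ι | Even S.card} := by
  ext x
  constructor
  · rintro ⟨hsign, hprod⟩
    have hx : signVec {i | x i = -1} = x := by
      funext i
      rcases hsign i with h | h <;> norm_num [signVec_eq_ite, h]
    refine ⟨_, ?_, hx⟩
    rw [← hx, prod_signVec, neg_one_pow_eq_one_iff_even (by norm_num)] at hprod
    exact hprod
  · rintro ⟨S, hS, rfl⟩
    refine ⟨fun i => ?_, by rw [prod_signVec, hS.neg_one_pow]⟩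
    rw [signVec_eq_ite]; split_ifs <;> simp

lemma sum_signVec_mul_signVec_le {S T : Finset ι} (hS : Even S.card) (hT : Odd T.card) :
    ∑ i, signVec S i * signVec T i ≤ Fintype.card ι - 2 := by
  have hodd : Odd (symmDiff S T).card := by
    have := card_symmDiff_add_two_mul_card_inter S T
    rw [Nat.even_iff] at hS; rw [Nat.odd_iff] at hT ⊢; omega
  simp_rw [← signVec_symmDiff, sum_signVec]
  have : (1 : ℝ) ≤ (symmDiff S T).card := by exact_mod_cast hodd.pos
  linarith

def parityHalfspaces (ι : Type*) [DecidableEq ι] [Fintype ι] : Set (ι → ℝ) :=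
  {x | (∀ i, x i ∈ Set.Icc (-1 : ℝ) 1) ∧
    ∀ S : Finset ι, Odd S.card → ∑ i, x i * signVec S i ≤ Fintype.card ι - 2}

lemma convex_parityHalfspaces : Convex ℝ (parityHalfspaces ι) := by
  rintro x ⟨hx_box, hx_odd⟩ y ⟨hy_box, hy_odd⟩ a b ha hb hab
  refine ⟨fun i => convex_Icc (-1 : ℝ) 1 (hx_box i) (hy_box i) ha hb hab, fun S hS => ?_⟩
  calc ∑ i, (a • x + b • y) i * signVec S i
      = a * ∑ i, x i * signVec S i + b * ∑ i, y i * signVec S i := by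
        simp only [Pi.add_apply, Pi.smul_apply, smul_eq_mul, add_mul, sum_add_distrib, mul_sum,
          mul_assoc]
    _ ≤ a * (Fintype.card ι - 2) + b * (Fintype.card ι - 2) :=
        add_le_add (mul_le_mul_of_nonneg_left (hx_odd S hS) ha)
          (mul_le_mul_of_nonneg_left (hy_odd S hS) hb)
    _ = Fintype.card ι - 2 := by rw [← add_mul, hab, one_mul]

lemma signVec_mem_parityHalfspaces {T : Finset ι} (hT : Even T.card) :
    signVec T ∈ parityHalfspaces ι := by
  refine ⟨fun i => ?_, fun S hS => sum_signVec_mul_signVec_le hT hS⟩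
  rw [Set.mem_Icc, ← abs_le, abs_signVec]

lemma exists_even_sum_mul_le {x : ι → ℝ} (hx : x ∈ parityHalfspaces ι)
    (c : ι → ℝ) : ∃ S : Finset ι, Even S.card ∧ ∑ i, x i * c i ≤ ∑ i, signVec S i * c i := by
  obtain ⟨hbox, hodd⟩ := hx
  set N : Finset ι := {j | c j < 0}
  have hN : ∀ i, signVec N i * c i = |c i| := signVec_filter_neg_mul c
  have hxc : ∀ i, x i * c i = |c i| * (x i * signVec N i) := fun i => by
    rw [← hN]; linear_combination -(x i * c i) * signVec_mul_self N i
  have hxN : ∀ i, x i * signVec N i ≤ 1 := fun i => by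
    refine (le_abs_self _).trans ?_
    rw [abs_mul, abs_signVec, mul_one, abs_le]
    exact hbox i
  rcases Nat.even_or_odd N.card with hN_even | hN_odd
  · refine ⟨N, hN_even, sum_le_sum fun i _ => ?_⟩
    rw [hxc, hN]
    exact mul_le_of_le_one_right (abs_nonneg _) (hxN i)
  obtain ⟨j, -⟩ := card_pos.1 hN_odd.pos
  obtain ⟨k, -, hk⟩ := exists_min_image univ (fun i => |c i|) ⟨j, mem_univ j⟩
  refine ⟨symmDiff N {k}, ?_, ?_⟩
  · have := card_symmDiff_add_two_mul_card_inter N {k}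
    rw [card_singleton] at this
    rw [Nat.odd_iff] at hN_odd
    rw [Nat.even_iff]; omega
  have hsplit : ∀ i, x i * c i =
      (|c i| - |c k|) * (x i * signVec N i) + |c k| * (x i * signVec N i) := fun i => by
    rw [hxc]; ring
  have hrest : ∑ i, (|c i| - |c k|) * (x i * signVec N i) ≤ ∑ i, (|c i| - |c k|) :=
    sum_le_sum fun i _ => mul_le_of_le_one_right (sub_nonneg.2 (hk i (mem_univ i))) (hxN i)
  have htight : ∑ i, x i * signVec N i ≤ Fintype.card ι - 2 := hodd N hN_odd
  calc ∑ i, x i * c i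
      = ∑ i, (|c i| - |c k|) * (x i * signVec N i) + |c k| * ∑ i, x i * signVec N i := by
        simp_rw [hsplit, sum_add_distrib, mul_sum]
    _ ≤ ∑ i, (|c i| - |c k|) + |c k| * (Fintype.card ι - 2) :=
        add_le_add hrest (mul_le_mul_of_nonneg_left htight (abs_nonneg _))
    _ = ∑ i, signVec {k} i * |c i| := by
        rw [sum_signVec_singleton_mul, sum_sub_distrib, sum_const, card_univ, nsmul_eq_mul]; ring
    _ = ∑ i, signVec (symmDiff N {k}) i * c i := by
        simp_rw [signVec_symmDiff, mul_right_comm _ (signVec {k} _), hN, mul_comm]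

theorem convexHull_image_signVec_even :
    convexHull ℝ (signVec '' {S : Finset ι | Even S.card}) = parityHalfspaces ι := by
  refine subset_antisymm (convexHull_min ?_ convex_parityHalfspaces) fun x hx => ?_
  · rintro _ ⟨T, hT, rfl⟩
    exact signVec_mem_parityHalfspaces hT
  rw [← iInter_halfSpaces_eq (convex_convexHull ℝ _)
    (((Set.toFinite _).image signVec).isClosed_convexHull (𝕜 := ℝ))]
  simp only [Set.mem_iInter, Set.mem_ofPred_eq]
  intro l
  have hl : ∀ y, l y = ∑ i, y i * l fun j => if i = j then 1 else 0 :=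
    l.toLinearMap.pi_apply_eq_sum_univ
  obtain ⟨S, hS, hle⟩ := exists_even_sum_mul_le hx fun i => l fun j => if i = j then 1 else 0
  exact ⟨signVec S, subset_convexHull ℝ _ ⟨S, hS, rfl⟩, by rwa [hl, hl]⟩

end

/-- Halfspace description of the parity polytope: `x ∈ PP_n` iff
`x ∈ [-1,1]^n` and `⟨x, 1 - 2·1_S⟩ ≤ n - 2` for every odd subset `S ⊆ [n]`. -/
theorem parityPolytope_eq_halfspaces (n : ℕ) :
    parityPolytope n =
      {x : Fin n → ℝ |
        (∀ i, x i ∈ Set.Icc (-1 : ℝ) 1) ∧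
        ∀ S : Finset (Fin n), Odd S.card →
          ∑ i, x i * (1 - 2 * (if i ∈ S then (1 : ℝ) else 0)) ≤ (n : ℝ) - 2} := by
  rw [parityPolytope, setOf_sign_prod_eq_one_eq_image_signVec, convexHull_image_signVec_even,
    parityHalfspaces, Fintype.card_fin]
  rfl
end

section
/- For every d ∈ PP_n (the parity polytope), there exists X ∈ SO(n) with diag(X) = d. -/
open Matrix

/-!
Induction on `n`, merging the last two coordinates. A point `d` of the parity polytope in
dimension `m + 2`, with last two coordinates `p, q`, is a convex combination of vertices `z`;
the same combination of the products `z_{m} z_{m+1}` gives a number `s` such that `d` with `p, q`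
replaced by `s` lies in the parity polytope of dimension `m + 1`, and `(p, q, s)` lies in the
tetrahedron `|p - q| ≤ 1 - s`, `|p + q| ≤ 1 + s`. By induction some `X' ∈ SO(m + 1)` has that
diagonal; in `X' ⊕ 1` the last two diagonal entries are `s, 1`, and multiplying by plane rotations
on both sides turns the block `diag(s, 1)` into one with diagonal `(p, q)`, without touching the
other diagonal entries.
-/

noncomputable def rotationMatrix (θ : ℝ) : Matrix (Fin 2) (Fin 2) ℝ :=
  !![Real.cos θ, -Real.sin θ; Real.sin θ, Real.cos θ]

lemma rotationMatrix_mem_specialOrthogonalGroup (θ : ℝ) :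
    rotationMatrix θ ∈ specialOrthogonalGroup (Fin 2) ℝ := by
  simp [rotationMatrix, Real.cos_sq_add_sin_sq]

lemma diag_rotationMatrix_mul_mul_rotationMatrix (α β s : ℝ) :
    diag (rotationMatrix α * !![s, 0; 0, 1] * rotationMatrix β) =
      ![((1 + s) * Real.cos (α + β) - (1 - s) * Real.cos (α - β)) / 2,
        ((1 + s) * Real.cos (α + β) + (1 - s) * Real.cos (α - β)) / 2] := by
  ext i
  fin_cases i <;> simp [rotationMatrix, Real.cos_add, Real.cos_sub] <;> ring

lemma exists_mul_cos_eq_of_abs_le {x y : ℝ} (h : |x| ≤ y) : ∃ θ, y * Real.cos θ = x := by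
  rcases (abs_nonneg x).trans h |>.eq_or_lt with hy | hy
  · exact ⟨0, by simp [← hy, abs_nonpos_iff.mp (hy ▸ h)]⟩
  · have hxy : |x / y| ≤ 1 := by
      rw [abs_div, abs_of_pos hy]
      exact div_le_one_of_le₀ h hy.le
    refine ⟨Real.arccos (x / y), ?_⟩
    rw [Real.cos_arccos (abs_le.mp hxy).1 (abs_le.mp hxy).2, mul_div_cancel₀ _ hy.ne']

lemma exists_diag_rotationMatrix_mul_mul_rotationMatrix {s : ℝ} {v : Fin 2 → ℝ}
    (h₁ : |v 0 - v 1| ≤ 1 - s) (h₂ : |v 0 + v 1| ≤ 1 + s) :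
    ∃ α β, diag (rotationMatrix α * !![s, 0; 0, 1] * rotationMatrix β) = v := by
  obtain ⟨A, hA⟩ := exists_mul_cos_eq_of_abs_le ((abs_sub_comm _ _).trans_le h₁)
  obtain ⟨B, hB⟩ := exists_mul_cos_eq_of_abs_le h₂
  refine ⟨(A + B) / 2, (B - A) / 2, ?_⟩
  rw [diag_rotationMatrix_mul_mul_rotationMatrix, show (A + B) / 2 + (B - A) / 2 = B by ring,
    show (A + B) / 2 - (B - A) / 2 = A by ring, hA, hB]
  ext i
  fin_cases i <;> simp <;> ring

section Blocks

variable {ι κ R : Type*} [Fintype ι] [DecidableEq ι] [Fintype κ] [CommRing R]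

lemma fromBlocks_mem_specialOrthogonalGroup [DecidableEq κ] {A : Matrix ι ι R}
    {D : Matrix κ κ R} (hA : A ∈ specialOrthogonalGroup ι R)
    (hD : D ∈ specialOrthogonalGroup κ R) :
    fromBlocks A 0 0 D ∈ specialOrthogonalGroup (ι ⊕ κ) R := by
  rw [mem_specialOrthogonalGroup_iff, mem_orthogonalGroup_iff'] at *
  refine ⟨?_, by simp [det_fromBlocks_zero₂₁, hA.2, hD.2]⟩
  simp [fromBlocks_transpose, fromBlocks_multiply, hA.1, hD.1]

lemma reindex_mem_specialOrthogonalGroup [DecidableEq κ] {A : Matrix ι ι R} (e : ι ≃ κ)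
    (hA : A ∈ specialOrthogonalGroup ι R) : reindex e e A ∈ specialOrthogonalGroup κ R := by
  rw [mem_specialOrthogonalGroup_iff, mem_orthogonalGroup_iff'] at *
  refine ⟨?_, by rw [det_reindex_self, hA.2]⟩
  simp [reindex_apply, transpose_submatrix, submatrix_mul_equiv, hA.1]

lemma diag_fromBlocks_one_mul_mul_fromBlocks_one (Y : Matrix (ι ⊕ κ) (ι ⊕ κ) R)
    (P Q : Matrix κ κ R) :
    diag (fromBlocks 1 0 0 P * Y * fromBlocks 1 0 0 Q) =
      Sum.elim (diag Y.toBlocks₁₁) (diag (P * Y.toBlocks₂₂ * Q)) := by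
  rw [← fromBlocks_toBlocks Y, fromBlocks_multiply, fromBlocks_multiply]
  ext (i | i) <;> simp

end Blocks

lemma exists_diag_eq_sum_elim {ι : Type*} [Fintype ι] [DecidableEq ι]
    {Y : Matrix (ι ⊕ Fin 2) (ι ⊕ Fin 2) ℝ} (hY : Y ∈ specialOrthogonalGroup (ι ⊕ Fin 2) ℝ)
    {s : ℝ} (hY₂₂ : Y.toBlocks₂₂ = !![s, 0; 0, 1]) {v : Fin 2 → ℝ}
    (h₁ : |v 0 - v 1| ≤ 1 - s) (h₂ : |v 0 + v 1| ≤ 1 + s) :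
    ∃ X ∈ specialOrthogonalGroup (ι ⊕ Fin 2) ℝ, diag X = Sum.elim (diag Y.toBlocks₁₁) v := by
  obtain ⟨α, β, hαβ⟩ := exists_diag_rotationMatrix_mul_mul_rotationMatrix h₁ h₂
  have hR (θ : ℝ) : fromBlocks 1 0 0 (rotationMatrix θ) ∈ specialOrthogonalGroup (ι ⊕ Fin 2) ℝ :=
    fromBlocks_mem_specialOrthogonalGroup (one_mem _) (rotationMatrix_mem_specialOrthogonalGroup θ)
  refine ⟨_, mul_mem (mul_mem (hR α) hY) (hR β), ?_⟩
  rw [diag_fromBlocks_one_mul_mul_fromBlocks_one, hY₂₂, hαβ]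

lemma exists_diag_eq_append {m : ℕ} {X' : Matrix (Fin (m + 1)) (Fin (m + 1)) ℝ}
    (hX' : X' ∈ specialOrthogonalGroup (Fin (m + 1)) ℝ) {u : Fin m → ℝ} {s : ℝ}
    (hdiag : diag X' = Fin.snoc u s) {v : Fin 2 → ℝ}
    (h₁ : |v 0 - v 1| ≤ 1 - s) (h₂ : |v 0 + v 1| ≤ 1 + s) :
    ∃ X ∈ specialOrthogonalGroup (Fin (m + 2)) ℝ, diag X = Fin.append u v := by
  -- regroups the indices of `X' ⊕ 1` so that its last two form the `Fin 2` block
  let e : Fin (m + 1) ⊕ Fin 1 ≃ Fin m ⊕ Fin 2 :=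
    (finSumFinEquiv (m := m + 1) (n := 1)).trans (finSumFinEquiv (m := m) (n := 2)).symm
  have he₀ : e.symm (Sum.inr 0) = Sum.inl (Fin.last m) := by
    simp [e, Equiv.symm_apply_eq, Fin.ext_iff]
  have he₁ : e.symm (Sum.inr 1) = Sum.inr 0 := by
    simp [e, Equiv.symm_apply_eq, Fin.ext_iff]
  have he (i : Fin m) : e.symm (Sum.inl i) = Sum.inl i.castSucc := by
    simp [e, Equiv.symm_apply_eq, Fin.ext_iff]
  let Y := reindex e e (fromBlocks X' 0 0 1)
  have hY : Y ∈ specialOrthogonalGroup (Fin m ⊕ Fin 2) ℝ :=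
    reindex_mem_specialOrthogonalGroup e (fromBlocks_mem_specialOrthogonalGroup hX' (one_mem _))
  have hY₂₂ : Y.toBlocks₂₂ = !![s, 0; 0, 1] := by
    have hs : X' (Fin.last m) (Fin.last m) = s := by simpa using congrFun hdiag (Fin.last m)
    ext i j
    fin_cases i <;> fin_cases j <;> simp [Y, toBlocks₂₂, he₀, he₁, hs]
  have hY₁₁ : diag Y.toBlocks₁₁ = u := by
    ext i
    simpa [Y, toBlocks₁₁, he] using congrFun hdiag i.castSucc
  obtain ⟨X₀, hX₀, hdiag₀⟩ := exists_diag_eq_sum_elim hY hY₂₂ h₁ h₂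
  rw [hY₁₁] at hdiag₀
  refine ⟨reindex finSumFinEquiv finSumFinEquiv X₀,
    reindex_mem_specialOrthogonalGroup _ hX₀, ?_⟩
  ext i
  induction i using Fin.addCases <;> simp <;> exact congrFun hdiag₀ _

def parityVertices (n : ℕ) : Set (Fin n → ℝ) :=
  {x | (∀ i, x i = 1 ∨ x i = -1) ∧ ∏ i, x i = 1}

lemma parityPolytope_one : parityPolytope 1 = {1} := by
  have hV : parityVertices 1 = {1} := by
    ext x
    simp [parityVertices, funext_iff, Fin.forall_fin_one]
    exact Or.inl
  change convexHull ℝ (parityVertices 1) = _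
  rw [hV, convexHull_singleton]

lemma exists_prod_mem_of_mem_convexHull {𝕜 E F : Type*} [Ring 𝕜] [PartialOrder 𝕜]
    [IsOrderedRing 𝕜] [AddCommGroup E] [Module 𝕜 E] [AddCommGroup F] [Module 𝕜 F]
    {S : Set (E × F)} (hS : Convex 𝕜 S) {V : Set E} (hV : ∀ z ∈ V, ∃ y, (z, y) ∈ S) {x : E}
    (hx : x ∈ convexHull 𝕜 V) : ∃ y, (x, y) ∈ S := by
  have hVS : convexHull 𝕜 V ⊆ Prod.fst '' S :=
    convexHull_min (fun z hz => (hV z hz).elim fun y hy => ⟨(z, y), hy, rfl⟩)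
      (hS.linear_image (LinearMap.fst 𝕜 E F))
  obtain ⟨⟨_, y⟩, hy, rfl⟩ := hVS hx
  exact ⟨y, hy⟩

lemma convex_setOf_abs_sub_le_and_abs_add_le {E : Type*} [AddCommGroup E] [Module ℝ E]
    (f g h : E →ₗ[ℝ] ℝ) :
    Convex ℝ {x | |f x - g x| ≤ 1 - h x ∧ |f x + g x| ≤ 1 + h x} := by
  intro x hx y hy a b ha hb hab
  simp only [Set.mem_ofPred_eq, map_add, map_smul, smul_eq_mul, abs_le] at hx hy ⊢
  refine ⟨⟨?_, ?_⟩, ?_, ?_⟩ <;> nlinarith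

lemma abs_sub_le_and_abs_add_le_of_sign {x y : ℝ} (hx : x = 1 ∨ x = -1) (hy : y = 1 ∨ y = -1) :
    |x - y| ≤ 1 - x * y ∧ |x + y| ≤ 1 + x * y := by
  rcases hx with rfl | rfl <;> rcases hy with rfl | rfl <;> norm_num

lemma exists_snoc_mem_parityPolytope {m : ℕ} {u : Fin m → ℝ} {v : Fin 2 → ℝ}
    (h : Fin.append u v ∈ parityPolytope (m + 2)) :
    ∃ s, Fin.snoc u s ∈ parityPolytope (m + 1) ∧ |v 0 - v 1| ≤ 1 - s ∧ |v 0 + v 1| ≤ 1 + s := by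
  let merge : (Fin (m + 2) → ℝ) × ℝ →ₗ[ℝ] Fin (m + 1) → ℝ :=
    { toFun p := Fin.snoc (fun i => p.1 (Fin.castAdd 2 i)) p.2
      map_add' p q := by ext i; induction i using Fin.lastCases <;> simp
      map_smul' c p := by ext i; induction i using Fin.lastCases <;> simp }
  let coord (j : Fin 2) : (Fin (m + 2) → ℝ) × ℝ →ₗ[ℝ] ℝ :=
    (LinearMap.proj (Fin.natAdd m j)).comp (LinearMap.fst ℝ _ ℝ)
  let S := merge ⁻¹' parityPolytope (m + 1) ∩
    {p | |coord 0 p - coord 1 p| ≤ 1 - p.2 ∧ |coord 0 p + coord 1 p| ≤ 1 + p.2}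
  have hS : Convex ℝ S := ((convex_convexHull ℝ _).linear_preimage merge).inter
    (convex_setOf_abs_sub_le_and_abs_add_le (coord 0) (coord 1) (LinearMap.snd ℝ _ ℝ))
  have hV (z) (hz : z ∈ parityVertices (m + 2)) : ∃ s, (z, s) ∈ S := by
    obtain ⟨hsign, hprod⟩ := hz
    refine ⟨z (Fin.natAdd m 0) * z (Fin.natAdd m 1), subset_convexHull ℝ _ ⟨?_, ?_⟩,
      abs_sub_le_and_abs_add_le_of_sign (hsign _) (hsign _)⟩
    · intro i
      induction i using Fin.lastCases with
      | last =>
        rcases hsign (Fin.natAdd m 0) with h₀ | h₀ <;>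
          rcases hsign (Fin.natAdd m 1) with h₁ | h₁ <;> simp [merge, h₀, h₁]
      | cast i => simpa [merge] using hsign _
    · rw [Fin.prod_univ_add, Fin.prod_univ_two] at hprod
      simpa [merge, Fin.prod_univ_castSucc, mul_assoc] using hprod
  obtain ⟨s, hs₁, hs₂⟩ := exists_prod_mem_of_mem_convexHull hS hV h
  exact ⟨s, by simpa [merge] using hs₁, by simpa [coord] using hs₂⟩

theorem exists_mem_specialOrthogonalGroup_diag_eq :
    ∀ {n : ℕ} {d : Fin n → ℝ}, d ∈ parityPolytope n →
      ∃ X ∈ specialOrthogonalGroup (Fin n) ℝ, diag X = d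
  | 0, _, _ => ⟨1, one_mem _, Subsingleton.elim _ _⟩
  | 1, d, hd => by
    rw [parityPolytope_one, Set.mem_singleton_iff] at hd
    exact ⟨1, one_mem _, by rw [hd, diag_one]⟩
  | m + 2, d, hd => by
    rw [← Fin.append_castAdd_natAdd (f := d)] at hd ⊢
    obtain ⟨s, hs, h₁, h₂⟩ := exists_snoc_mem_parityPolytope hd
    obtain ⟨X', hX', hdiag⟩ := exists_mem_specialOrthogonalGroup_diag_eq hs
    exact exists_diag_eq_append hX' hdiag h₁ h₂

/-- Every point of the parity polytope is the diagonal of some `X ∈ SO(n)`. -/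
theorem exists_so_matrix_with_diag (n : ℕ) (d : Fin n → ℝ)
    (hd : d ∈ parityPolytope n) :
    ∃ X ∈ SpecialOrthogonal n, Matrix.diag X = d := by
  obtain ⟨X, hX, hdiag⟩ := exists_mem_specialOrthogonalGroup_diag_eq hd
  exact ⟨X, ⟨(mem_orthogonalGroup_iff' _ _).mp hX.1, hX.2⟩, hdiag⟩
end

section
/- If π : ℝ^{n×n} → ℝ^m is a linear map of rank greater than n(n−1)/2 and n ≥ 3, then π(SO(n)) is not convex. -/
/-!
`SO(n)` is covered by the Cayley charts `A ↦ R * (1 + A)⁻¹ * (1 - A)`, `R ∈ SO(n)`, which are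
smooth on the space `so(n)` of skew-symmetric matrices, of dimension `n(n-1)/2`. Hence `SO(n)`,
and every linear image of it, has Hausdorff dimension at most `n(n-1)/2`. On the other hand, for
`n ≥ 3` the affine span of `SO(n)` is the whole matrix space, so the affine span of `π(SO(n))` is
the range of `π`; if `π(SO(n))` were convex, its Hausdorff dimension would be the rank of `π`.
-/

open Matrix

open Set LieAlgebra.Orthogonal Topology
open scoped Matrix.Norms.Operator

section Cayley

variable {ι : Type*} [Fintype ι] [DecidableEq ι]

noncomputable def cayley (A : Matrix ι ι ℝ) : Matrix ι ι ℝ := (1 + A)⁻¹ * (1 - A)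

theorem one_add_mul_cayley {A : Matrix ι ι ℝ} (hA : IsUnit (1 + A)) :
    (1 + A) * cayley A = 1 - A :=
  mul_nonsing_inv_cancel_left _ _ ((isUnit_iff_isUnit_det _).1 hA)

theorem cayley_mul_one_add {A : Matrix ι ι ℝ} (hA : IsUnit (1 + A)) :
    cayley A * (1 + A) = 1 - A := by
  rw [cayley, Matrix.mul_assoc, show (1 - A) * (1 + A) = (1 + A) * (1 - A) by noncomm_ring,
    nonsing_inv_mul_cancel_left _ _ ((isUnit_iff_isUnit_det _).1 hA)]

theorem cayley_eq_of_one_add_mul_eq {A Y : Matrix ι ι ℝ} (hA : IsUnit (1 + A))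
    (h : (1 + A) * Y = 1 - A) : cayley A = Y := by
  rw [cayley, ← h, nonsing_inv_mul_cancel_left _ _ ((isUnit_iff_isUnit_det _).1 hA)]

theorem isUnit_one_add_cayley {Y : Matrix ι ι ℝ} (hY : IsUnit (1 + Y)) :
    IsUnit (1 + cayley Y) := by
  refine (isUnit_iff_isUnit_det _).2 (isUnit_iff_ne_zero.2
    (det_ne_zero_of_left_inverse (B := (2⁻¹ : ℝ) • (1 + Y)) ?_))
  rw [Matrix.smul_mul, Matrix.mul_add, Matrix.mul_one, one_add_mul_cayley hY]
  module

theorem cayley_cayley {Y : Matrix ι ι ℝ} (hY : IsUnit (1 + Y)) : cayley (cayley Y) = Y := by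
  refine cayley_eq_of_one_add_mul_eq (isUnit_one_add_cayley hY) ?_
  calc (1 + cayley Y) * Y = cayley Y * (1 + Y) + Y - cayley Y := by noncomm_ring
    _ = 1 - cayley Y := by rw [cayley_mul_one_add hY]; abel

theorem cayley_mem_so {Y : Matrix ι ι ℝ} (hY : Yᵀ * Y = 1) (h1Y : IsUnit (1 + Y)) :
    cayley Y ∈ so ι ℝ := by
  rw [mem_so, ← add_eq_zero_iff_eq_neg]
  refine (h1Y.mul_left_eq_zero).1 ?_
  have h := congrArg transpose (one_add_mul_cayley h1Y)
  rw [transpose_mul, transpose_add, transpose_sub, transpose_one] at h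
  calc ((cayley Y)ᵀ + cayley Y) * (1 + Y)
      = (cayley Y)ᵀ * (1 + Yᵀ) * Y + cayley Y * (1 + Y) := by
        rw [Matrix.mul_assoc, Matrix.add_mul (1 : Matrix ι ι ℝ), hY]; noncomm_ring
    _ = 0 := by rw [h, cayley_mul_one_add h1Y, Matrix.sub_mul, hY, Matrix.one_mul]; abel

theorem isUnit_one_add_of_mem_so {A : Matrix ι ι ℝ} (hA : A ∈ so ι ℝ) : IsUnit (1 + A) := by
  rw [isUnit_iff_isUnit_det, isUnit_iff_ne_zero, ne_eq, ← exists_mulVec_eq_zero_iff]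
  rintro ⟨x, hx0, hx⟩
  rw [mem_so] at hA
  rw [add_mulVec, one_mulVec, add_eq_zero_iff_neg_eq'] at hx
  have hskew : x ⬝ᵥ (A *ᵥ x) = -(x ⬝ᵥ (A *ᵥ x)) := by
    conv_lhs => rw [dotProduct_mulVec, ← mulVec_transpose, hA, neg_mulVec, neg_dotProduct,
      dotProduct_comm]
  have hxx : x ⬝ᵥ x = -(x ⬝ᵥ (A *ᵥ x)) := by rw [← dotProduct_neg, hx]
  exact hx0 (dotProduct_self_eq_zero.1 (by linarith))

theorem contDiffOn_cayley : ContDiffOn ℝ 1 (cayley : Matrix ι ι ℝ → Matrix ι ι ℝ) (so ι ℝ) := by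
  intro A hA
  have hinv : ContDiffAt ℝ 1 (fun B : Matrix ι ι ℝ => Ring.inverse (1 + B)) A :=
    (contDiffAt_ringInverse ℝ (isUnit_one_add_of_mem_so hA).unit).comp A
      (contDiff_const.add contDiff_id).contDiffAt
  unfold cayley
  simp_rw [nonsing_inv_eq_ringInverse]
  exact (hinv.mul (contDiff_const.sub contDiff_id).contDiffAt).contDiffWithinAt

theorem orthogonal_inter_subset_image_cayley {R : Matrix ι ι ℝ} (hR : Rᵀ * R = 1) :
    {X : Matrix ι ι ℝ | Xᵀ * X = 1} ∩ {X | IsUnit (1 + Rᵀ * X)} ⊆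
      (fun A => R * cayley A) '' so ι ℝ := by
  rintro X ⟨hX, h1X⟩
  have hRY : (Rᵀ * X)ᵀ * (Rᵀ * X) = 1 := by
    rw [transpose_mul, transpose_transpose, Matrix.mul_assoc, ← Matrix.mul_assoc R,
      mul_eq_one_comm.1 hR, Matrix.one_mul, hX]
  refine ⟨cayley (Rᵀ * X), cayley_mem_so hRY h1X, show R * cayley (cayley (Rᵀ * X)) = X from ?_⟩
  rw [cayley_cayley h1X, ← Matrix.mul_assoc, mul_eq_one_comm.1 hR, Matrix.one_mul]

theorem setOf_isUnit_one_add_transpose_mul_mem_nhds {R : Matrix ι ι ℝ} (hR : Rᵀ * R = 1) :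
    {X : Matrix ι ι ℝ | IsUnit (1 + Rᵀ * X)} ∈ 𝓝 R := by
  refine IsOpen.mem_nhds ?_ ?_
  · exact Units.isOpen.preimage (continuous_const.add (continuous_const.mul continuous_id))
  · rw [mem_ofPred_eq, hR, ← two_smul ℝ (1 : Matrix ι ι ℝ)]
    exact isUnit_one.smul (Units.mk0 (2 : ℝ) two_ne_zero)

theorem convex_so : Convex ℝ (so ι ℝ : Set (Matrix ι ι ℝ)) :=
  (so ι ℝ : Submodule ℝ (Matrix ι ι ℝ)).convex

theorem Submodule.dimH_coe {E : Type*} [NormedAddCommGroup E] [NormedSpace ℝ E]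
    [FiniteDimensional ℝ E] (K : Submodule ℝ E) : dimH (K : Set E) = Module.finrank ℝ K := by
  rw [← Subtype.range_coe (s := (K : Set E)), ← image_univ, isometry_subtype_coe.dimH_image]
  exact Real.dimH_univ_eq_finrank K

theorem dimH_orthogonal_le :
    dimH {X : Matrix ι ι ℝ | Xᵀ * X = 1} ≤
      Module.finrank ℝ (so ι ℝ : Submodule ℝ (Matrix ι ι ℝ)) := by
  have : SecondCountableTopology (Matrix ι ι ℝ) := by
    have := FiniteDimensional.proper_real (Matrix ι ι ℝ)
    exact secondCountable_of_proper
  by_contra! h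
  obtain ⟨R, hR, hlarge⟩ := exists_mem_nhdsWithin_lt_dimH_of_lt_dimH h
  refine (hlarge _ (Filter.inter_mem self_mem_nhdsWithin (mem_nhdsWithin_of_mem_nhds
    (setOf_isUnit_one_add_transpose_mul_mem_nhds hR)))).not_ge ?_
  calc dimH ({X : Matrix ι ι ℝ | Xᵀ * X = 1} ∩ {X | IsUnit (1 + Rᵀ * X)})
      ≤ dimH ((fun A => R * cayley A) '' so ι ℝ) :=
        dimH_mono (orthogonal_inter_subset_image_cayley hR)
    _ ≤ dimH (so ι ℝ : Set (Matrix ι ι ℝ)) :=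
      ((contDiff_const.mul contDiff_id).comp_contDiffOn contDiffOn_cayley).dimH_image_le
        convex_so Subset.rfl
    _ = Module.finrank ℝ (so ι ℝ : Submodule ℝ (Matrix ι ι ℝ)) := Submodule.dimH_coe _

end Cayley

theorem finrank_so_le (n : ℕ) :
    Module.finrank ℝ (so (Fin n) ℝ : Submodule ℝ (Matrix (Fin n) (Fin n) ℝ)) ≤
      n * (n - 1) / 2 := by
  let below : (so (Fin n) ℝ : Submodule ℝ (Matrix (Fin n) (Fin n) ℝ)) →ₗ[ℝ]
      ((Σ i : Fin n, Fin i) → ℝ) :=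
    LinearMap.pi fun p => entryLinearMap ℝ ℝ p.1 (Fin.castLE p.1.2.le p.2) ∘ₗ Submodule.subtype _
  have hinj : Function.Injective below := by
    refine (injective_iff_map_eq_zero below).2 fun ⟨A, hA⟩ h0 => ?_
    have hlow : ∀ i j : Fin n, j < i → A i j = 0 := fun i j hji =>
      congrFun h0 ⟨i, ⟨j, hji⟩⟩
    have hskew : ∀ i j, A j i = -A i j := fun i j => congrFun₂ ((mem_so _ _ A).1 hA) i j
    refine Subtype.ext (Matrix.ext fun i j => show A i j = 0 from ?_)
    rcases lt_trichotomy j i with h | rfl | h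
    · exact hlow i j h
    · linarith [hskew j j]
    · rw [← neg_neg (A i j), ← hskew, hlow j i h, neg_zero]
  calc Module.finrank ℝ (so (Fin n) ℝ : Submodule ℝ (Matrix (Fin n) (Fin n) ℝ))
      ≤ Fintype.card (Σ i : Fin n, Fin i) :=
        (LinearMap.finrank_le_finrank_of_injective hinj).trans_eq
          (Module.finrank_fintype_fun_eq_card ℝ)
    _ = n * (n - 1) / 2 := by
      simp [Fintype.card_sigma, Fin.sum_univ_eq_sum_range (fun i => i) n, Finset.sum_range_id]

section Reflections

variable {ι : Type*} [DecidableEq ι]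

def coordReflection (i : ι) : Matrix ι ι ℝ := diagonal (Function.update 1 i (-1))

theorem coordReflection_eq (i : ι) : coordReflection i = 1 - (2 : ℝ) • single i i 1 := by
  rw [coordReflection, ← diagonal_one, ← diagonal_single, ← diagonal_smul, diagonal_sub]
  congr 1; ext t; by_cases h : t = i <;> simp [h]; norm_num

variable [Fintype ι]

theorem det_coordReflection (i : ι) : (coordReflection i).det = -1 := by
  simp [coordReflection, det_diagonal, Finset.prod_update_of_mem]

theorem transpose_coordReflection_mul_self (i : ι) :
    (coordReflection i)ᵀ * coordReflection i = 1 := by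
  rw [coordReflection, diagonal_transpose, diagonal_mul_diagonal, ← diagonal_one]
  congr 1; ext t; by_cases h : t = i <;> simp [h]

theorem transpose_permMatrix_mul_self (σ : Equiv.Perm ι) :
    (σ.permMatrix ℝ)ᵀ * σ.permMatrix ℝ = 1 := by
  rw [transpose_permMatrix, ← permMatrix_mul, mul_inv_cancel, permMatrix_one]

theorem single_mul_permMatrix (a b : ι) (c : ℝ) (σ : Equiv.Perm ι) :
    single a b c * σ.permMatrix ℝ = single a (σ b) c := by
  ext x y
  rw [Equiv.Perm.permMatrix, PEquiv.mul_toMatrix_toPEquiv, submatrix_apply, id, single_apply,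
    single_apply]
  simp only [Equiv.eq_symm_apply]

end Reflections

section VectorSpan

variable {n : ℕ}

theorem mul_mem_specialOrthogonal_of_det_eq_neg_one {A B : Matrix (Fin n) (Fin n) ℝ}
    (hA : Aᵀ * A = 1) (hB : Bᵀ * B = 1) (hdA : A.det = -1) (hdB : B.det = -1) :
    A * B ∈ SpecialOrthogonal n :=
  ⟨by rw [transpose_mul, Matrix.mul_assoc, ← Matrix.mul_assoc Aᵀ, hA, Matrix.one_mul, hB],
    by rw [det_mul, hdA, hdB]; norm_num⟩

theorem one_mem_specialOrthogonal : (1 : Matrix (Fin n) (Fin n) ℝ) ∈ SpecialOrthogonal n :=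
  ⟨by rw [transpose_one, Matrix.one_mul], det_one⟩

theorem single_add_single_mem_vectorSpan {i j : Fin n} (hij : i ≠ j) :
    single i i 1 + single j j 1 ∈ vectorSpan ℝ (SpecialOrthogonal n) := by
  have hmem : 1 - coordReflection i * coordReflection j ∈ vectorSpan ℝ (SpecialOrthogonal n) :=
    vsub_mem_vectorSpan ℝ one_mem_specialOrthogonal
      (mul_mem_specialOrthogonal_of_det_eq_neg_one (transpose_coordReflection_mul_self i)
        (transpose_coordReflection_mul_self j) (det_coordReflection i) (det_coordReflection j))
  have hprod : single i i (1 : ℝ) * single j j 1 = 0 := single_mul_single_of_ne _ _ _ _ hij _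
  have key : 1 - coordReflection i * coordReflection j =
      (2 : ℝ) • (single i i 1 + single j j 1) := by
    rw [coordReflection_eq, coordReflection_eq]
    simp only [Matrix.sub_mul, Matrix.mul_sub, Matrix.smul_mul, Matrix.mul_smul, Matrix.one_mul,
      Matrix.mul_one, hprod]
    module
  rw [key] at hmem
  simpa using Submodule.smul_mem _ (2⁻¹ : ℝ) hmem

theorem single_self_mem_vectorSpan (hn : 3 ≤ n) (i : Fin n) :
    single i i 1 ∈ vectorSpan ℝ (SpecialOrthogonal n) := by
  obtain ⟨j, hji, -⟩ := Fin.exists_ne_and_ne_of_two_lt i i (by omega)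
  obtain ⟨k, hki, hkj⟩ := Fin.exists_ne_and_ne_of_two_lt i j (by omega)
  have key : single i i (1 : ℝ) = (2⁻¹ : ℝ) • ((single i i 1 + single j j 1) +
      (single i i 1 + single k k 1) - (single j j 1 + single k k 1)) := by
    module
  rw [key]
  exact Submodule.smul_mem _ _ (Submodule.sub_mem _ (Submodule.add_mem _
    (single_add_single_mem_vectorSpan hji.symm) (single_add_single_mem_vectorSpan hki.symm))
    (single_add_single_mem_vectorSpan hkj.symm))

theorem single_mem_vectorSpan (hn : 3 ≤ n) (i j : Fin n) :
    single i j 1 ∈ vectorSpan ℝ (SpecialOrthogonal n) := by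
  rcases eq_or_ne i j with rfl | hij
  · exact single_self_mem_vectorSpan hn i
  obtain ⟨k, hki, hkj⟩ := Fin.exists_ne_and_ne_of_two_lt i j (by omega)
  set P := (Equiv.swap i j).permMatrix ℝ
  have hdetP : P.det = -1 := by
    rw [det_permutation, Equiv.Perm.sign_swap hij]; norm_num
  have hmem : coordReflection k * P - coordReflection i * P ∈
      vectorSpan ℝ (SpecialOrthogonal n) :=
    vsub_mem_vectorSpan ℝ
      (mul_mem_specialOrthogonal_of_det_eq_neg_one (transpose_coordReflection_mul_self k)
        (transpose_permMatrix_mul_self _) (det_coordReflection k) hdetP)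
      (mul_mem_specialOrthogonal_of_det_eq_neg_one (transpose_coordReflection_mul_self i)
        (transpose_permMatrix_mul_self _) (det_coordReflection i) hdetP)
  have hdiff : coordReflection k - coordReflection i = (2 : ℝ) • (single i i 1 - single k k 1) := by
    rw [coordReflection_eq, coordReflection_eq]
    module
  have key : coordReflection k * P - coordReflection i * P =
      (2 : ℝ) • (single i j 1 - single k k 1) := by
    rw [← Matrix.sub_mul, hdiff, Matrix.smul_mul, Matrix.sub_mul, single_mul_permMatrix,
      single_mul_permMatrix, Equiv.swap_apply_left, Equiv.swap_apply_of_ne_of_ne hki hkj]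
  rw [key] at hmem
  simpa using Submodule.add_mem _ (Submodule.smul_mem _ (2⁻¹ : ℝ) hmem)
    (single_self_mem_vectorSpan hn k)

theorem vectorSpan_specialOrthogonal (hn : 3 ≤ n) :
    vectorSpan ℝ (SpecialOrthogonal n) = ⊤ := by
  rw [eq_top_iff, ← (Matrix.stdBasis ℝ (Fin n) (Fin n)).span_eq, Submodule.span_le]
  rintro - ⟨⟨i, j⟩, rfl⟩
  rw [stdBasis_eq_single]
  exact single_mem_vectorSpan hn i j

end VectorSpan

theorem dimH_specialOrthogonal_le (n : ℕ) :
    dimH (SpecialOrthogonal n) ≤ (n * (n - 1) / 2 : ℕ) :=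
  calc dimH (SpecialOrthogonal n) ≤ dimH {X : Matrix (Fin n) (Fin n) ℝ | Xᵀ * X = 1} :=
        dimH_mono fun _ hX => hX.1
    _ ≤ Module.finrank ℝ (so (Fin n) ℝ : Submodule ℝ (Matrix (Fin n) (Fin n) ℝ)) :=
        dimH_orthogonal_le
    _ ≤ (n * (n - 1) / 2 : ℕ) := by exact_mod_cast finrank_so_le n

/-- If `π : ℝ^{n×n} → ℝ^m` is linear of rank greater than `n(n-1)/2` and
`n ≥ 3`, then `π(SO(n))` is not convex. -/
theorem high_rank_image_so_nonconvex (n m : ℕ) (hn : 3 ≤ n)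
    (π : Matrix (Fin n) (Fin n) ℝ →ₗ[ℝ] (Fin m → ℝ))
    (hrank : n * (n - 1) / 2 < Module.finrank ℝ (LinearMap.range π)) :
    ¬ Convex ℝ (π '' SpecialOrthogonal n) := by
  intro hconv
  have hspan : vectorSpan ℝ (π '' SpecialOrthogonal n) = LinearMap.range π := by
    rw [← LinearMap.coe_toAffineMap, ← AffineMap.map_vectorSpan, vectorSpan_specialOrthogonal hn,
      LinearMap.toAffineMap_linear, Submodule.map_top]
  have hdim : dimH (π '' SpecialOrthogonal n) = Module.finrank ℝ (LinearMap.range π) := by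
    rw [Real.Convex.dimH_eq_finrank_vectorSpan hconv
      ⟨π 1, mem_image_of_mem π one_mem_specialOrthogonal⟩, hspan]
  have hle : dimH (π '' SpecialOrthogonal n) ≤ (n * (n - 1) / 2 : ℕ) :=
    (π.toContinuousLinearMap.lipschitz.dimH_image_le _).trans (dimH_specialOrthogonal_le n)
  rw [hdim] at hle
  exact hrank.not_ge (by exact_mod_cast hle)
end

section
/- Let U ∈ O(n) and let R be an a×b submatrix of U with a + b > n. Then ‖R‖_op = 1. -/
/-!
Write `U.submatrix r s = Pᵀ * A`, where `A = U.submatrix id s` and `P = (1).submatrix id r` both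
have orthonormal columns, i.e. act as isometries `ℝᵇ → ℝⁿ` and `ℝᵃ → ℝⁿ`. Then
`‖Pᵀ A‖ ≤ ‖P‖ ‖A‖ ≤ 1`. Since `a + b > n`, the ranges of `A` and `P` meet in some `v = A x = P y ≠ 0`,
and `Pᵀ A x = Pᵀ P y = y` with `‖y‖ = ‖v‖ = ‖x‖`, so the norm is attained.
-/

open Matrix

open Module

theorem Submodule.inf_ne_bot_of_finrank_lt {K V : Type*} [DivisionRing K] [AddCommGroup V]
    [Module K V] [FiniteDimensional K V] {s t : Submodule K V}
    (h : finrank K V < finrank K s + finrank K t) : s ⊓ t ≠ ⊥ := fun hst =>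
  (Submodule.finrank_add_finrank_le_of_disjoint (disjoint_iff.mpr hst)).not_gt h

open ContinuousLinearMap in
theorem LinearIsometry.norm_adjoint_comp_eq_one {𝕜 E F G : Type*} [RCLike 𝕜]
    [NormedAddCommGroup E] [InnerProductSpace 𝕜 E] [CompleteSpace E] [FiniteDimensional 𝕜 E]
    [NormedAddCommGroup F] [InnerProductSpace 𝕜 F] [CompleteSpace F]
    [NormedAddCommGroup G] [InnerProductSpace 𝕜 G] [CompleteSpace G]
    (A : F →ₗᵢ[𝕜] E) (P : G →ₗᵢ[𝕜] E) (h : finrank 𝕜 E < finrank 𝕜 F + finrank 𝕜 G) :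
    ‖adjoint P.toContinuousLinearMap ∘L A.toContinuousLinearMap‖ = 1 := by
  have hdim : finrank 𝕜 E < finrank 𝕜 (LinearMap.range A.toLinearMap) +
      finrank 𝕜 (LinearMap.range P.toLinearMap) := by
    rwa [LinearMap.finrank_range_of_inj A.injective, LinearMap.finrank_range_of_inj P.injective]
  obtain ⟨v, hv, hv0⟩ := (Submodule.ne_bot_iff _).mp (Submodule.inf_ne_bot_of_finrank_lt hdim)
  obtain ⟨⟨x, rfl⟩, y, hy : P y = A x⟩ := Submodule.mem_inf.mp hv
  have hx : (adjoint P.toContinuousLinearMap ∘L A.toContinuousLinearMap) x = y := by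
    rw [ContinuousLinearMap.comp_apply, LinearIsometry.coe_toContinuousLinearMap, ← hy]
    exact congr($(P.adjoint_comp_self) y)
  have hxy : ‖y‖ = ‖x‖ := by rw [← P.norm_map, ← A.norm_map, hy]
  have hx0 : ‖x‖ ≠ 0 := by rw [← A.norm_map]; exact norm_ne_zero_iff.mpr hv0
  refine le_antisymm ?_ ?_
  · calc _ ≤ ‖adjoint P.toContinuousLinearMap‖ * ‖A.toContinuousLinearMap‖ := opNorm_comp_le _ _
      _ ≤ 1 := by
        rw [LinearIsometryEquiv.norm_map]
        exact mul_le_one₀ P.norm_toContinuousLinearMap_le (norm_nonneg _)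
          A.norm_toContinuousLinearMap_le
  · simpa [hx, hxy, hx0] using
      ratio_le_opNorm (adjoint P.toContinuousLinearMap ∘L A.toContinuousLinearMap) x

namespace Matrix

theorem transpose_mul_submatrix_id_eq_one {m n k α : Type*} [Fintype m] [DecidableEq n]
    [DecidableEq k] [Semiring α] {U : Matrix m n α} (hU : Uᵀ * U = 1) {s : k → n}
    (hs : Function.Injective s) : (U.submatrix id s)ᵀ * U.submatrix id s = 1 := by
  rw [transpose_submatrix, ← submatrix_mul _ _ _ _ _ Function.bijective_id, hU, submatrix_one _ hs]

theorem submatrix_eq_transpose_submatrix_one_mul {l m n k α : Type*} [Fintype m] [DecidableEq m]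
    [Semiring α] (U : Matrix m n α) (r : l → m) (s : k → n) :
    U.submatrix r s = ((1 : Matrix m m α).submatrix id r)ᵀ * U.submatrix id s := by
  rw [transpose_submatrix, transpose_one, ← submatrix_mul _ _ _ _ _ Function.bijective_id,
    Matrix.one_mul]

section Euclidean

variable {m n k : Type*} [Fintype m] [Fintype n] [Fintype k]
  [DecidableEq m] [DecidableEq n] [DecidableEq k]

theorem toEuclideanLin_transpose_mul (P : Matrix m k ℝ) (A : Matrix m n ℝ) :
    toEuclideanLin (Pᵀ * A) = (toEuclideanLin P).adjoint ∘ₗ toEuclideanLin A := by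
  rw [← toEuclideanLin_conjTranspose_eq_adjoint, conjTranspose_eq_transpose_of_trivial]
  exact toLpLin_mul_same _ _ _

theorem norm_toEuclideanLin_of_transpose_mul_self {A : Matrix m n ℝ} (hA : Aᵀ * A = 1)
    (x : EuclideanSpace ℝ n) : ‖toEuclideanLin A x‖ = ‖x‖ := by
  refine (LinearMap.toContinuousLinearMap (toEuclideanLin A)).norm_map_iff_adjoint_comp_self.mpr
    ?_ x
  have h := toEuclideanLin_transpose_mul A A
  rw [hA, toLpLin_one] at h
  ext1 y
  exact congr($h.symm y)

end Euclidean

end Matrix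

theorem opNorm_transpose_mul_eq_one {n a b : ℕ} {P : Matrix (Fin n) (Fin a) ℝ}
    {A : Matrix (Fin n) (Fin b) ℝ} (hP : Pᵀ * P = 1) (hA : Aᵀ * A = 1) (h : n < a + b) :
    opNorm (Pᵀ * A) = 1 := by
  let isometry {k : ℕ} (M : Matrix (Fin n) (Fin k) ℝ) (hM : Mᵀ * M = 1) :
      EuclideanSpace ℝ (Fin k) →ₗᵢ[ℝ] EuclideanSpace ℝ (Fin n) :=
    ⟨toEuclideanLin M, norm_toEuclideanLin_of_transpose_mul_self hM⟩
  unfold opNorm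
  rw [toEuclideanLin_transpose_mul]
  exact (isometry A hA).norm_adjoint_comp_eq_one (isometry P hP) (by simpa [add_comm] using h)

/-- Any `a × b` submatrix of an orthogonal matrix with `a + b > n` has
operator norm exactly `1`. -/
theorem opNorm_submatrix_of_orthogonal (n a b : ℕ)
    (U : Matrix (Fin n) (Fin n) ℝ) (hU : Uᵀ * U = 1)
    (r : Fin a → Fin n) (s : Fin b → Fin n)
    (hr : Function.Injective r) (hs : Function.Injective s)
    (hab : n < a + b) :
    opNorm (U.submatrix r s) = 1 := by
  rw [U.submatrix_eq_transpose_submatrix_one_mul r s]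
  exact opNorm_transpose_mul_eq_one (transpose_mul_submatrix_id_eq_one (by simp) hr)
    (transpose_mul_submatrix_id_eq_one hU hs) hab
end

section
/- Let A ∈ ℝ^{n×n} be symmetric positive definite and let Ũ ∈ ℝ^{n×(n−1)} satisfy ŨᵀŨ = A_{2,2}, the bottom-right (n−1)×(n−1) block of A, and suppose the bottom (n−1)×(n−1) submatrix of Ũ is invertible. Then there are exactly two vectors u ∈ ℝ^n such that the matrix U = (u | Ũ) satisfies UᵀU = A, and these two vectors differ in their first coordinate. -/
/-!
Writing `α = A₀₀` and `a = (A_{k+1,0})ₖ`, the equation `(u | Ũ)ᵀ (u | Ũ) = A` says `u ⬝ u = α` and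
`uᵀ Ũ = aᵀ`. As the bottom block of `Ũ` is invertible, the left kernel of `Ũ` is a line spanned by
some `e` with `e₀ = 1`, so the solutions of `uᵀ Ũ = aᵀ` form the line `p + t e`. Taking `p = Ũ y`
with `A₂₂ y = a` makes `p ⟂ e`, hence `|p + t e|² = |p|² + t² |e|²`, and `|p|² = aᵀ A₂₂⁻¹ a < α`
is the positivity of the Schur complement of `A₂₂` in `A`. So `t = ±s` for some `s > 0`, and the
two solutions have first coordinates `p₀ ± s`.
-/

open Matrix

def appendCol {n : ℕ} (u : Fin (n + 1) → ℝ)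
    (Utilde : Matrix (Fin (n + 1)) (Fin n) ℝ) :
    Matrix (Fin (n + 1)) (Fin (n + 1)) ℝ :=
  Matrix.of fun i j => Fin.cases (u i) (fun k => Utilde i k) j

namespace Matrix

theorem vecMul_eq_apply_zero_smul_add {R m : Type*} [Semiring R] {n : ℕ}
    (M : Matrix (Fin (n + 1)) m R) (v : Fin (n + 1) → R) :
    v ᵥ* M = v 0 • M 0 + Fin.tail v ᵥ* M.submatrix Fin.succ id := by
  conv_lhs => rw [← Fin.cons_self_tail v]
  exact cons_vecMul (v 0) (Fin.tail v) M

section LeftKernel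

variable {R : Type*} [CommRing R] {n : ℕ} {M : Matrix (Fin (n + 1)) (Fin n) R}
  (hM : IsUnit (M.submatrix Fin.succ id).det)
include hM

theorem eq_zero_of_vecMul_eq_zero_of_apply_zero_eq_zero {v : Fin (n + 1) → R} (hv : v ᵥ* M = 0)
    (h0 : v 0 = 0) : v = 0 := by
  have htail : Fin.tail v = 0 := by
    refine vecMul_injective_of_isUnit ((isUnit_iff_isUnit_det _).2 hM) ?_
    rwa [vecMul_eq_apply_zero_smul_add, h0, zero_smul, zero_add,
      ← zero_vecMul (A := M.submatrix Fin.succ id)] at hv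
  rw [← Fin.cons_self_tail v, h0, htail]
  exact cons_zero_zero

theorem exists_vecMul_eq_zero_and_apply_zero_eq_one :
    ∃ e : Fin (n + 1) → R, e ᵥ* M = 0 ∧ e 0 = 1 := by
  set B := M.submatrix Fin.succ id
  refine ⟨Fin.cons 1 (-(M 0 ᵥ* B⁻¹)), ?_, rfl⟩
  rw [vecMul_eq_apply_zero_smul_add]
  simp [B, neg_vecMul, vecMul_vecMul, nonsing_inv_mul _ hM]

theorem eq_add_smul_of_vecMul_eq {e : Fin (n + 1) → R} (he : e ᵥ* M = 0) (he0 : e 0 = 1)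
    {v w : Fin (n + 1) → R} (h : w ᵥ* M = v ᵥ* M) : w = v + (w 0 - v 0) • e := by
  rw [← sub_eq_zero]
  refine eq_zero_of_vecMul_eq_zero_of_apply_zero_eq_zero hM ?_ ?_
  · simp [sub_vecMul, add_vecMul, smul_vecMul, h, he]
  · simp [he0]

end LeftKernel

theorem PosDef.dotProduct_lt_apply_zero_zero {n : ℕ} {A : Matrix (Fin (n + 1)) (Fin (n + 1)) ℝ}
    (hA : A.PosDef) {y : Fin n → ℝ}
    (hy : A.submatrix Fin.succ Fin.succ *ᵥ y = fun k ↦ A k.succ 0) :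
    (fun k ↦ A k.succ 0) ⬝ᵥ y < A 0 0 := by
  set x : Fin (n + 1) → ℝ := Fin.cons 1 (-y)
  have hAx : A *ᵥ x = Pi.single 0 (A 0 0 - (fun k ↦ A k.succ 0) ⬝ᵥ y) := by
    ext i
    induction i using Fin.cases with
    | zero =>
      have hsymm (j : Fin n) : A j.succ 0 = A 0 j.succ :=
        (isHermitian_iff_isSymm.1 hA.1).apply _ _
      simp [x, mulVec, dotProduct, Fin.sum_univ_succ, hsymm, ← sub_eq_add_neg]
    | succ k =>
      have := congrFun hy k
      simp [x, mulVec, dotProduct, Fin.sum_univ_succ] at this ⊢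
      linarith
  have hx : x ≠ 0 := fun h ↦ by simpa [x] using congrFun h 0
  simpa [hAx, x] using hA.dotProduct_mulVec_pos hx

end Matrix

theorem dotProduct_self_add_smul {R ι : Type*} [CommRing R] [Fintype ι] {p e : ι → R}
    (hpe : p ⬝ᵥ e = 0) (t : R) : (p + t • e) ⬝ᵥ (p + t • e) = p ⬝ᵥ p + t ^ 2 * (e ⬝ᵥ e) := by
  simp only [add_dotProduct, dotProduct_add, smul_dotProduct, dotProduct_smul, smul_eq_mul,
    dotProduct_comm e p, hpe]
  ring

theorem exists_pos_dotProduct_self_add_smul_eq_iff {ι : Type*} [Fintype ι] {p e : ι → ℝ}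
    {c : ℝ} (hpe : p ⬝ᵥ e = 0) (he : e ≠ 0) (hc : p ⬝ᵥ p < c) :
    ∃ s : ℝ, 0 < s ∧ ∀ t : ℝ, (p + t • e) ⬝ᵥ (p + t • e) = c ↔ t = s ∨ t = -s := by
  have hee : 0 < e ⬝ᵥ e := by simpa using dotProduct_self_star_pos_iff.2 he
  have hq : 0 < (c - p ⬝ᵥ p) / (e ⬝ᵥ e) := div_pos (sub_pos.2 hc) hee
  refine ⟨_, Real.sqrt_pos.2 hq, fun t ↦ ?_⟩
  rw [← sq_eq_sq_iff_eq_or_eq_neg, Real.sq_sqrt hq.le, eq_div_iff hee.ne',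
    dotProduct_self_add_smul hpe]
  constructor <;> intro h <;> linarith

section AppendCol

variable {n : ℕ} (w : Fin (n + 1) → ℝ) (U : Matrix (Fin (n + 1)) (Fin n) ℝ)

@[simp]
theorem appendCol_gram_zero_zero : ((appendCol w U)ᵀ * appendCol w U) 0 0 = w ⬝ᵥ w := rfl

@[simp]
theorem appendCol_gram_succ_zero (k : Fin n) :
    ((appendCol w U)ᵀ * appendCol w U) k.succ 0 = (w ᵥ* U) k :=
  dotProduct_comm _ _

@[simp]
theorem appendCol_gram_zero_succ (k : Fin n) :
    ((appendCol w U)ᵀ * appendCol w U) 0 k.succ = (w ᵥ* U) k := rfl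

@[simp]
theorem appendCol_gram_succ_succ (k l : Fin n) :
    ((appendCol w U)ᵀ * appendCol w U) k.succ l.succ = (Uᵀ * U) k l := rfl

theorem appendCol_gram_eq_iff {A : Matrix (Fin (n + 1)) (Fin (n + 1)) ℝ} (hA : A.IsSymm)
    (hU : Uᵀ * U = A.submatrix Fin.succ Fin.succ) :
    (appendCol w U)ᵀ * appendCol w U = A ↔ w ⬝ᵥ w = A 0 0 ∧ w ᵥ* U = fun k ↦ A k.succ 0 := by
  refine ⟨fun h ↦ ⟨by rw [← h]; rfl, funext fun k ↦ by rw [← h, appendCol_gram_succ_zero]⟩, ?_⟩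
  rintro ⟨h00, hcol⟩
  ext i j
  induction i using Fin.cases <;> induction j using Fin.cases
  · simpa using h00
  · rw [appendCol_gram_zero_succ, hcol]
    exact hA.apply _ _
  · simp [hcol]
  · simp [hU]

end AppendCol

/-- Let `A ∈ ℝ^{(n+1)×(n+1)}` be symmetric positive definite and let
`Ũ ∈ ℝ^{(n+1)×n}` satisfy `Ũᵀ Ũ = A₂₂` (the bottom-right `n × n` block of `A`),
with the bottom `n × n` submatrix of `Ũ` invertible. Then there are exactly two
vectors `u` such that `U = (u | Ũ)` satisfies `Uᵀ U = A`, and they differ in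
their first coordinate. -/
theorem exactly_two_completions (n : ℕ)
    (A : Matrix (Fin (n + 1)) (Fin (n + 1)) ℝ) (hA : A.PosDef)
    (Utilde : Matrix (Fin (n + 1)) (Fin n) ℝ)
    (hUA : Utildeᵀ * Utilde = A.submatrix Fin.succ Fin.succ)
    (hbot : IsUnit (Utilde.submatrix Fin.succ id).det) :
    ∃ u v : Fin (n + 1) → ℝ, u 0 ≠ v 0 ∧
      {w : Fin (n + 1) → ℝ | (appendCol w Utilde)ᵀ * appendCol w Utilde = A} =
        {u, v} := by
  obtain ⟨e, he, he0⟩ := exists_vecMul_eq_zero_and_apply_zero_eq_one hbot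
  obtain ⟨y, hy⟩ := mulVec_surjective_iff_isUnit.2
    (hA.submatrix (Fin.succ_injective _)).isUnit fun k ↦ A k.succ 0
  set p := Utilde *ᵥ y
  have hp : p ᵥ* Utilde = fun k ↦ A k.succ 0 := by
    rw [← mulVec_transpose, mulVec_mulVec, hUA, hy]
  have hpe : p ⬝ᵥ e = 0 := by rw [dotProduct_comm, dotProduct_mulVec, he, zero_dotProduct]
  have hpp : p ⬝ᵥ p < A 0 0 := by
    rw [dotProduct_mulVec, hp]
    exact hA.dotProduct_lt_apply_zero_zero hy
  obtain ⟨s, hs, hsol⟩ := exists_pos_dotProduct_self_add_smul_eq_iff hpe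
    (fun h ↦ by simp [h] at he0) hpp
  refine ⟨p + s • e, p + (-s) • e, by simp [he0]; linarith, ?_⟩
  ext w
  simp only [Set.mem_ofPred_eq, Set.mem_insert_iff, Set.mem_singleton_iff,
    appendCol_gram_eq_iff w Utilde (isHermitian_iff_isSymm.1 hA.1) hUA]
  constructor
  · rintro ⟨hww, hwU⟩
    rw [eq_add_smul_of_vecMul_eq hbot he he0 (hwU.trans hp.symm)] at hww ⊢
    rcases (hsol _).1 hww with h | h <;> simp [h]
  · rintro (rfl | rfl) <;>
      exact ⟨(hsol _).2 (by simp), by rw [add_vecMul, smul_vecMul, he, hp, smul_zero, add_zero]⟩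
end
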